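/- arXiv:1401.5629 — 3 statements merged into one kernel-verified Lean document; each statement's English description precedes it below -/
import Mathlib

section
/- Let (φ₁, ξ₁, η₁) and (φ₂, ξ₂, η₂) be two almost paracontact structures on M with η_i(ξ_j) = δ_{ij}, φ_iξ_j = 0 for i,j ∈ {1,2}, and φ₁φ₂ + φ₂φ₁ = −(η₁⊗ξ₂ + η₂⊗ξ₁). Then for every t ∈ [0, π/2], the triple φ_t = cos t·φ₁ + sin t·φ₂, ξ_t = cos t·ξ₁ + sin t·ξ₂, η_t = cos t·η₁ + sin t·η₂ satisfies φ_t² = I − η_t⊗ξ_t and η_t(ξ_t) = 1, i.e., it is again an almost paracontact structure. -/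
/-- Given two compatible almost paracontact structures `(φᵢ, ξᵢ, ηᵢ)` with
`ηᵢ(ξⱼ) = δᵢⱼ`, `φᵢξⱼ = 0` and `φ₁φ₂ + φ₂φ₁ = −(η₁⊗ξ₂ + η₂⊗ξ₁)`, the family
`(cos t·φ₁ + sin t·φ₂, cos t·ξ₁ + sin t·ξ₂, cos t·η₁ + sin t·η₂)` is again an almost
paracontact structure for every `t ∈ [0, π/2]`. -/
theorem one_parameter_family_almost_paracontact
    {V : Type*} [AddCommGroup V] [Module ℝ V]
    (φ₁ φ₂ : V →ₗ[ℝ] V) (ξ₁ ξ₂ : V) (η₁ η₂ : V →ₗ[ℝ] ℝ)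
    (h1 : ∀ X : V, φ₁ (φ₁ X) = X - η₁ X • ξ₁) (h1' : η₁ ξ₁ = 1)
    (h2 : ∀ X : V, φ₂ (φ₂ X) = X - η₂ X • ξ₂) (h2' : η₂ ξ₂ = 1)
    (h12 : η₁ ξ₂ = 0) (h21 : η₂ ξ₁ = 0)
    (hp11 : φ₁ ξ₁ = 0) (hp22 : φ₂ ξ₂ = 0) (hp12 : φ₁ ξ₂ = 0) (hp21 : φ₂ ξ₁ = 0)
    (hanti : ∀ X : V, φ₁ (φ₂ X) + φ₂ (φ₁ X) = -(η₁ X • ξ₂ + η₂ X • ξ₁)) :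
    ∀ t ∈ Set.Icc (0 : ℝ) (Real.pi / 2),
      (∀ X : V,
          (Real.cos t • φ₁ + Real.sin t • φ₂) ((Real.cos t • φ₁ + Real.sin t • φ₂) X) =
            X - (Real.cos t • η₁ + Real.sin t • η₂) X •
              (Real.cos t • ξ₁ + Real.sin t • ξ₂)) ∧
      (Real.cos t • η₁ + Real.sin t • η₂) (Real.cos t • ξ₁ + Real.sin t • ξ₂) = 1 := by
  intro t _
  have pyth := Real.sin_sq_add_cos_sq t
  constructor
  · intro X
    have key : φ₂ (φ₁ X) = -(η₁ X • ξ₂ + η₂ X • ξ₁) - φ₁ (φ₂ X) := by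
      rw [eq_sub_iff_add_eq, add_comm, hanti X]
    simp only [LinearMap.add_apply, LinearMap.smul_apply, map_add, map_smul, h1 X, h2 X, key]
    match_scalars <;> (try simp only [smul_eq_mul]) <;> nlinarith [pyth]
  · simp only [LinearMap.add_apply, LinearMap.smul_apply, map_add, map_smul, h1', h2',
      h12, h21, smul_eq_mul]
    nlinarith [pyth]
end

section
/- Let (φ, ξ, η) be an almost paracontact structure, Φ the induced generalized structure, and B a 2-form satisfying B(φ²X, Y) = B(φX, φY) for all X, Y. Then the B-transform Φ_B = e^B Φ e^{−B} satisfies Φ_B² = I − F, where F(X+α) = η(X)ξ + α(ξ)η; i.e., (Φ_B, ξ, η) is again a generalized almost paracontact structure. -/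
/-- If the 2-form `B` satisfies `B(φ²X, Y) = B(φX, φY)`, then the `B`-transform
`Φ_B = e^B Φ e^{−B}` of the induced generalized structure satisfies `Φ_B² = I − F`
with `F(X+α) = η(X)ξ + α(ξ)η`, i.e. `(Φ_B, ξ, η)` is a generalized almost paracontact
structure. -/
theorem B_transform_is_generalized_paracontact
    {V : Type*} [AddCommGroup V] [Module ℝ V]
    (φ : V →ₗ[ℝ] V) (ξ : V) (η : V →ₗ[ℝ] ℝ)
    (hφ : ∀ X : V, φ (φ X) = X - η X • ξ) (hη : η ξ = 1)
    (B : V →ₗ[ℝ] V →ₗ[ℝ] ℝ)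
    (hBskew : ∀ X Y : V, B X Y = -(B Y X))
    (hB2 : ∀ X Y : V, B (φ (φ X)) Y = B (φ X) (φ Y))
    (Φ eB eNegB ΦB : V × (V →ₗ[ℝ] ℝ) → V × (V →ₗ[ℝ] ℝ))
    (hΦ : ∀ p : V × (V →ₗ[ℝ] ℝ), Φ p = (φ p.1, -(p.2.comp φ)))
    (heB : ∀ p : V × (V →ₗ[ℝ] ℝ), eB p = (p.1, p.2 + B p.1))
    (heNegB : ∀ p : V × (V →ₗ[ℝ] ℝ), eNegB p = (p.1, p.2 - B p.1))
    (hΦB : ∀ p : V × (V →ₗ[ℝ] ℝ), ΦB p = eB (Φ (eNegB p))) :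
    ∀ p : V × (V →ₗ[ℝ] ℝ), ΦB (ΦB p) = p - (η p.1 • ξ, p.2 ξ • η) := by
  intro p
  obtain ⟨X, α⟩ := p
  have key : ∀ Y, η Y * B X ξ = η X * B ξ Y := by
    intro Y
    have h1 := hB2 Y X
    have h2 := hB2 X Y
    rw [hφ Y] at h1
    rw [hφ X] at h2
    simp only [map_sub, map_smul, LinearMap.sub_apply, LinearMap.smul_apply,
      smul_eq_mul] at h1 h2
    have hs1 := hBskew (φ Y) (φ X)
    have hs2 := hBskew X Y
    have hs3 := hBskew X ξ
    linear_combination (η Y) * hs3 + h1 + hs1 + h2 - hs2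
  rw [hΦB, hΦB, heNegB, hΦ, heB, heNegB, hΦ, heB]
  refine Prod.ext ?_ (LinearMap.ext fun Y => ?_)
  · simpa using hφ X
  · simp only [Prod.snd, Prod.fst, LinearMap.add_apply, LinearMap.sub_apply,
      LinearMap.neg_apply, LinearMap.comp_apply, Prod.mk_sub_mk, LinearMap.smul_apply,
      smul_eq_mul, hφ, map_sub, map_smul]
    linear_combination key Y
end

section
/- Let (φ, ξ, η) be an almost paracontact structure, Φ the induced generalized structure, and β a bivector field satisfying η(β(α))·ξ = α(ξ)·β(η) for every 1-form α. Then the β-transform Φ_β = e^β Φ e^{−β} satisfies Φ_β² = I − F with F(X+α) = η(X)ξ + α(ξ)η; i.e., (Φ_β, ξ, η) is a generalized almost paracontact structure. -/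
/-- If the bivector field `β` satisfies `η(βα)·ξ = α(ξ)·β(η)` for every 1-form `α`, then
the `β`-transform `Φ_β = e^β Φ e^{−β}` satisfies `Φ_β² = I − F` with
`F(X+α) = η(X)ξ + α(ξ)η`, i.e. `(Φ_β, ξ, η)` is a generalized almost paracontact
structure. -/
theorem beta_transform_is_generalized_paracontact
    {V : Type*} [AddCommGroup V] [Module ℝ V]
    (φ : V →ₗ[ℝ] V) (ξ : V) (η : V →ₗ[ℝ] ℝ)
    (hφ : ∀ X : V, φ (φ X) = X - η X • ξ) (hη : η ξ = 1)
    (β : (V →ₗ[ℝ] ℝ) →ₗ[ℝ] V)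
    (hβskew : ∀ α γ : V →ₗ[ℝ] ℝ, α (β γ) = -(γ (β α)))
    (hβ : ∀ α : V →ₗ[ℝ] ℝ, η (β α) • ξ = α ξ • β η)
    (Φ eβ eNegβ Φβ : V × (V →ₗ[ℝ] ℝ) → V × (V →ₗ[ℝ] ℝ))
    (hΦ : ∀ p : V × (V →ₗ[ℝ] ℝ), Φ p = (φ p.1, -(p.2.comp φ)))
    (heβ : ∀ p : V × (V →ₗ[ℝ] ℝ), eβ p = (p.1 + β p.2, p.2))
    (heNegβ : ∀ p : V × (V →ₗ[ℝ] ℝ), eNegβ p = (p.1 - β p.2, p.2))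
    (hΦβ : ∀ p : V × (V →ₗ[ℝ] ℝ), Φβ p = eβ (Φ (eNegβ p))) :
    ∀ p : V × (V →ₗ[ℝ] ℝ), Φβ (Φβ p) = p - (η p.1 • ξ, p.2 ξ • η) := by
  intro p
  obtain ⟨X, α⟩ := p
  simp only [hΦβ, heβ, hΦ, heNegβ]
  have key : ∀ Y : V, α (φ (φ Y)) = α Y - η Y * α ξ := by
    intro Y; rw [hφ]; simp [mul_comm]
  have h1 : (-(-(α.comp φ)).comp φ) = α - α ξ • η := by
    ext Y; simp [LinearMap.comp_apply, key Y, mul_comm]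
  refine Prod.ext ?_ h1
  show φ (φ (X - β α) + β (-(α.comp φ)) - β (-(α.comp φ)))
      + β (-(-(α.comp φ)).comp φ) = X - η X • ξ
  rw [h1, add_sub_cancel_right, hφ, map_sub, map_sub, map_smul, sub_smul, hβ]
  abel
end
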